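/- Let a < b and let C₀ : [a,b] → ℝ^{p×n}, C₁, C₂ : [a,b]² → ℝ^{p×n} and R₀ : [a,b] → ℝ^{n×m}, R₁, R₂ : [a,b]² → ℝ^{n×m} be continuous matrix-valued functions. Then for every y ∈ L²([a,b], ℝ^m) and almost every s ∈ [a,b], (P_{C₀,C₁,C₂}(P_{R₀,R₁,R₂} y))(s) = (P_{R̂₀,R̂₁,R̂₂} y)(s), where R̂₀(s) = C₀(s)R₀(s), R̂₁(s,η) = C₀(s)R₁(s,η) + C₁(s,η)R₀(η) + ∫_a^η C₁(s,θ)R₂(θ,η)dθ + ∫_η^s C₁(s,θ)R₁(θ,η)dθ + ∫_s^b C₂(s,θ)R₁(θ,η)dθ, and R̂₂(s,η) = C₀(s)R₂(s,η) + C₂(s,η)R₀(η) + ∫_a^s C₁(s,θ)R₂(θ,η)dθ + ∫_s^η C₂(s,θ)R₂(θ,η)dθ + ∫_η^b C₂(s,θ)R₁(θ,η)dθ. In particular, the composition of two 3-PI operators is a 3-PI operator. -/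

import Mathlib

/-!
Each 3-PI operator is a multiplication operator plus one integral operator over `[a, b]`, whose
kernel is `N₁` below the diagonal and `N₂` above it. Composing two such operators and applying
Fubini once on `[a, b]²` gives a multiplication operator by `C₀ R₀` plus an integral operator with
kernel `C₀ K_R + K_C R₀ + ∫ K_C K_R`. Splitting the `θ`-integral of `K_C(s, θ) K_R(θ, η)` at `η`
and `s` yields `R̂₁` for `η ≤ s` and `R̂₂` for `s < η`. All kernels are bounded on the square, so
every integral converges absolutely for `y ∈ L² ⊆ L¹`.
-/

open MeasureTheory Set

noncomputable local instance {k l : ℕ} : NormedAddCommGroup (Matrix (Fin k) (Fin l) ℝ) :=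
  Matrix.normedAddCommGroup

noncomputable local instance {k l : ℕ} : NormedSpace ℝ (Matrix (Fin k) (Fin l) ℝ) :=
  Matrix.normedSpace

/-- Matrix–vector multiplication, viewed as a map between Euclidean spaces. -/
def mulVecE {n m : ℕ} (M : Matrix (Fin n) (Fin m) ℝ) (v : EuclideanSpace ℝ (Fin m)) :
    EuclideanSpace ℝ (Fin n) := WithLp.toLp 2 (M.mulVec v)

/-- The 3-PI operator `P_{N₀,N₁,N₂}`, applied pointwise:
`(P_{N₀,N₁,N₂} y)(s) = N₀(s) y(s) + ∫_a^s N₁(s,θ) y(θ) dθ + ∫_s^b N₂(s,θ) y(θ) dθ`. -/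
noncomputable def threePI {n m : ℕ} (a b : ℝ)
    (N₀ : ℝ → Matrix (Fin n) (Fin m) ℝ)
    (N₁ N₂ : ℝ → ℝ → Matrix (Fin n) (Fin m) ℝ)
    (y : ℝ → EuclideanSpace ℝ (Fin m)) (s : ℝ) : EuclideanSpace ℝ (Fin n) :=
  mulVecE (N₀ s) (y s) + (∫ θ in a..s, mulVecE (N₁ s θ) (y θ))
    + ∫ θ in s..b, mulVecE (N₂ s θ) (y θ)

section

-- The topology induced by the local norm instance. The default `Matrix` topology agrees with it
-- only up to unfolding, which blocks instance search for `MemLp`, `IntervalIntegrable`, `→L[ℝ]`.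
noncomputable local instance {k l : ℕ} : TopologicalSpace (Matrix (Fin k) (Fin l) ℝ) :=
  @UniformSpace.toTopologicalSpace _ PseudoMetricSpace.toUniformSpace

noncomputable def mulVecCLM (n m : ℕ) :
    Matrix (Fin n) (Fin m) ℝ →L[ℝ] EuclideanSpace ℝ (Fin m) →L[ℝ] EuclideanSpace ℝ (Fin n) :=
  LinearMap.toContinuousLinearMap
    (LinearMap.toContinuousLinearMap.toLinearMap ∘ₗ (Matrix.toLpLin 2 2).toLinearMap)

section MulVecE

variable {p n m : ℕ}

@[simp]
lemma mulVecCLM_apply (M : Matrix (Fin n) (Fin m) ℝ) (v : EuclideanSpace ℝ (Fin m)) :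
    mulVecCLM n m M v = mulVecE M v :=
  rfl

lemma mulVecE_mul (A : Matrix (Fin p) (Fin n) ℝ) (B : Matrix (Fin n) (Fin m) ℝ)
    (v : EuclideanSpace ℝ (Fin m)) : mulVecE (A * B) v = mulVecE A (mulVecE B v) :=
  congrArg (WithLp.toLp 2) (Matrix.mulVec_mulVec v.ofLp A B).symm

lemma add_mulVecE (A B : Matrix (Fin n) (Fin m) ℝ) (v : EuclideanSpace ℝ (Fin m)) :
    mulVecE (A + B) v = mulVecE A v + mulVecE B v := by
  simp only [← mulVecCLM_apply, map_add, add_apply]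

lemma mulVecE_add (A : Matrix (Fin n) (Fin m) ℝ) (u v : EuclideanSpace ℝ (Fin m)) :
    mulVecE A (u + v) = mulVecE A u + mulVecE A v := by
  simp only [← mulVecCLM_apply, map_add]

lemma mulVecE_intervalIntegral (A : Matrix (Fin n) (Fin m) ℝ)
    {f : ℝ → EuclideanSpace ℝ (Fin m)} {c d : ℝ} (hf : IntervalIntegrable f volume c d) :
    mulVecE A (∫ x in c..d, f x) = ∫ x in c..d, mulVecE A (f x) :=
  ((mulVecCLM n m A).intervalIntegral_comp_comm hf).symm

lemma intervalIntegral_mulVecE {K : ℝ → Matrix (Fin n) (Fin m) ℝ} (v : EuclideanSpace ℝ (Fin m))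
    {c d : ℝ} (hK : IntervalIntegrable K volume c d) :
    mulVecE (∫ x in c..d, K x) v = ∫ x in c..d, mulVecE (K x) v :=
  (((mulVecCLM n m).flip v).intervalIntegral_comp_comm hK).symm

end MulVecE

section BoundedKernels

variable {α : Type*} [MeasurableSpace α] {μ : Measure α} {p n m : ℕ}

lemma MeasureTheory.MemLp.integrable_mulVecE {K : α → Matrix (Fin n) (Fin m) ℝ}
    {y : α → EuclideanSpace ℝ (Fin m)} (hK : MemLp K ⊤ μ) (hy : Integrable y μ) :
    Integrable (fun x => mulVecE (K x) (y x)) μ := by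
  rw [← memLp_one_iff_integrable] at hy ⊢
  refine hK.of_bilin (fun M v => mulVecE M v) ‖mulVecCLM n m‖₊ hy
    ((mulVecCLM n m).aestronglyMeasurable_comp₂ hK.1 hy.1) (ae_of_all _ fun x => ?_)
  exact (mulVecCLM n m).le_opNorm₂ (K x) (y x)

lemma Matrix.nnnorm_mul_le_card_mul (A : Matrix (Fin p) (Fin n) ℝ) (B : Matrix (Fin n) (Fin m) ℝ) :
    ‖A * B‖₊ ≤ n * ‖A‖₊ * ‖B‖₊ := by
  rw [← NNReal.coe_le_coe]
  push_cast
  refine (Matrix.norm_le_iff (by positivity)).2 fun i k => ?_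
  calc ‖(A * B) i k‖ ≤ ∑ j, ‖A i j‖ * ‖B j k‖ := by
        rw [Matrix.mul_apply]
        exact (norm_sum_le _ _).trans (Finset.sum_le_sum fun j _ => (norm_mul_le _ _))
    _ ≤ ∑ _j : Fin n, ‖A‖ * ‖B‖ := by
        gcongr with j
        · exact Matrix.norm_entry_le_entrywise_sup_norm A
        · exact Matrix.norm_entry_le_entrywise_sup_norm B
    _ = n * ‖A‖ * ‖B‖ := by simp [mul_assoc]

lemma MeasureTheory.MemLp.matrix_mul {A : α → Matrix (Fin p) (Fin n) ℝ}
    {B : α → Matrix (Fin n) (Fin m) ℝ} (hA : MemLp A ⊤ μ) (hB : MemLp B ⊤ μ) :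
    MemLp (fun x => A x * B x) ⊤ μ :=
  hA.of_bilin (· * ·) n hB
    ((Continuous.matrix_mul continuous_fst continuous_snd).comp_aestronglyMeasurable₂ hA.1 hB.1)
    (ae_of_all _ fun x => Matrix.nnnorm_mul_le_card_mul (A x) (B x))

end BoundedKernels

section Splitting

variable {E : Type*} [NormedAddCommGroup E] {f g h k : ℝ → E} {a b c d : ℝ}

lemma IntervalIntegrable.of_ae_eq_adjacent (hg : IntervalIntegrable g volume a b)
    (hh : IntervalIntegrable h volume b c) (hfg : f =ᵐ[volume.restrict (uIoc a b)] g)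
    (hfh : f =ᵐ[volume.restrict (uIoc b c)] h) : IntervalIntegrable f volume a c :=
  (hg.congr_ae hfg.symm).trans (hh.congr_ae hfh.symm)

variable [NormedSpace ℝ E]

lemma intervalIntegral.integral_eq_add_of_ae_eq (hg : IntervalIntegrable g volume a b)
    (hh : IntervalIntegrable h volume b c) (hfg : f =ᵐ[volume.restrict (uIoc a b)] g)
    (hfh : f =ᵐ[volume.restrict (uIoc b c)] h) :
    ∫ x in a..c, f x = (∫ x in a..b, g x) + ∫ x in b..c, h x := by
  rw [← integral_congr_ae_restrict hfg, ← integral_congr_ae_restrict hfh,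
    integral_add_adjacent_intervals (hg.congr_ae hfg.symm) (hh.congr_ae hfh.symm)]

lemma intervalIntegral.integral_eq_add_add_of_ae_eq (hg : IntervalIntegrable g volume a b)
    (hh : IntervalIntegrable h volume b c) (hk : IntervalIntegrable k volume c d)
    (hfg : f =ᵐ[volume.restrict (uIoc a b)] g) (hfh : f =ᵐ[volume.restrict (uIoc b c)] h)
    (hfk : f =ᵐ[volume.restrict (uIoc c d)] k) :
    ∫ x in a..d, f x = (∫ x in a..b, g x) + (∫ x in b..c, h x) + ∫ x in c..d, k x := by
  rw [integral_eq_add_of_ae_eq (hg.of_ae_eq_adjacent hh hfg hfh) hk Filter.EventuallyEq.rfl hfk,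
    integral_eq_add_of_ae_eq hg hh hfg hfh]

end Splitting

noncomputable def piKernel {M : Type*} (N₁ N₂ : ℝ → ℝ → M) (s θ : ℝ) : M :=
  if θ ≤ s then N₁ s θ else N₂ s θ

section PiKernel

variable {M : Type*} {N₁ N₂ : ℝ → ℝ → M} {s θ : ℝ}

lemma piKernel_of_le (h : θ ≤ s) : piKernel N₁ N₂ s θ = N₁ s θ := if_pos h

lemma piKernel_of_lt (h : s < θ) : piKernel N₁ N₂ s θ = N₂ s θ := if_neg h.not_ge

end PiKernel

section PiecewiseContinuous

variable {α E : Type*} [TopologicalSpace α] [MeasurableSpace α] [OpensMeasurableSpace α]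
  [SecondCountableTopology α] [NormedAddCommGroup E] {μ : Measure α} {T : Set α}

lemma ContinuousOn.memLp_top (hT : IsCompact T) (hTm : MeasurableSet T) {f : α → E}
    (hf : ContinuousOn f T) : MemLp f ⊤ (μ.restrict T) := by
  obtain ⟨C, hC⟩ := hT.exists_bound_of_continuousOn hf
  exact memLp_top_of_bound (hf.aestronglyMeasurable hTm) C (ae_restrict_of_forall_mem hTm hC)

lemma memLp_top_piecewise_of_continuousOn (hT : IsCompact T) (hTm : MeasurableSet T)
    {S : Set α} [DecidablePred (· ∈ S)] (hS : MeasurableSet S) {f g : α → E}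
    (hf : ContinuousOn f T) (hg : ContinuousOn g T) :
    MemLp (S.piecewise f g) ⊤ (μ.restrict T) :=
  MemLp.piecewise hS ((hf.memLp_top hT hTm).restrict S) ((hg.memLp_top hT hTm).restrict Sᶜ)

end PiecewiseContinuous

structure IsBoundedKernel {E : Type*} [NormedAddCommGroup E] (a b : ℝ) (K : ℝ → ℝ → E) :
    Prop where
  memLp_uncurry : MemLp (Function.uncurry K) ⊤
    ((volume.restrict (Ioc a b)).prod (volume.restrict (Ioc a b)))
  memLp_apply : ∀ s ∈ Icc a b, MemLp (K s) ⊤ (volume.restrict (Ioc a b))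
  memLp_flip : ∀ η ∈ Icc a b, MemLp (fun θ => K θ η) ⊤ (volume.restrict (Ioc a b))

lemma isBoundedKernel_piKernel {E : Type*} [NormedAddCommGroup E] {N₁ N₂ : ℝ → ℝ → E} {a b : ℝ}
    (hN₁ : ContinuousOn (Function.uncurry N₁) (Icc a b ×ˢ Icc a b))
    (hN₂ : ContinuousOn (Function.uncurry N₂) (Icc a b ×ˢ Icc a b)) :
    IsBoundedKernel a b (piKernel N₁ N₂) where
  -- `piKernel N₁ N₂` and its slices are, definitionally, `Set.piecewise` of the `N`s along the
  -- diagonal, which is measurable.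
  memLp_uncurry := by
    rw [Measure.prod_restrict, ← Measure.volume_eq_prod]
    exact (memLp_top_piecewise_of_continuousOn (isCompact_Icc.prod isCompact_Icc)
      (measurableSet_Icc.prod measurableSet_Icc) (measurableSet_le measurable_snd measurable_fst)
      hN₁ hN₂).mono_measure
      (Measure.restrict_mono (prod_mono Ioc_subset_Icc_self Ioc_subset_Icc_self) le_rfl)
  memLp_apply s hs :=
    (memLp_top_piecewise_of_continuousOn isCompact_Icc measurableSet_Icc measurableSet_Iic
      (hN₁.uncurry_left s hs) (hN₂.uncurry_left s hs)).mono_measure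
      (Measure.restrict_mono Ioc_subset_Icc_self le_rfl)
  memLp_flip η hη :=
    (memLp_top_piecewise_of_continuousOn isCompact_Icc measurableSet_Icc measurableSet_Ici
      (hN₁.uncurry_right η hη) (hN₂.uncurry_right η hη)).mono_measure
      (Measure.restrict_mono Ioc_subset_Icc_self le_rfl)

section IntervalFubini

variable {E : Type*} [NormedAddCommGroup E] [NormedSpace ℝ E] {a b : ℝ} (hab : a ≤ b)
  {F : ℝ → ℝ → E}
  (hF : Integrable (Function.uncurry F)
    ((volume.restrict (Ioc a b)).prod (volume.restrict (Ioc a b))))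
include hab hF

lemma intervalIntegral_integral_swap :
    ∫ x in a..b, ∫ y in a..b, F x y = ∫ y in a..b, ∫ x in a..b, F x y := by
  simp only [intervalIntegral.integral_of_le hab]
  exact integral_integral_swap hF

lemma intervalIntegrable_integral_left :
    IntervalIntegrable (fun x => ∫ y in a..b, F x y) volume a b := by
  simp only [intervalIntegrable_iff_integrableOn_Ioc_of_le hab, intervalIntegral.integral_of_le hab]
  exact hF.integral_prod_left

lemma intervalIntegrable_integral_right :
    IntervalIntegrable (fun y => ∫ x in a..b, F x y) volume a b := by
  simp only [intervalIntegrable_iff_integrableOn_Ioc_of_le hab, intervalIntegral.integral_of_le hab]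
  exact hF.integral_prod_right

end IntervalFubini

noncomputable def kernelOp {n m : ℕ} (a b : ℝ) (M₀ : ℝ → Matrix (Fin n) (Fin m) ℝ)
    (K : ℝ → ℝ → Matrix (Fin n) (Fin m) ℝ) (y : ℝ → EuclideanSpace ℝ (Fin m)) (s : ℝ) :
    EuclideanSpace ℝ (Fin n) :=
  mulVecE (M₀ s) (y s) + ∫ θ in a..b, mulVecE (K s θ) (y θ)

section ThreePI

variable {n m : ℕ} {a b s : ℝ} {N₀ : ℝ → Matrix (Fin n) (Fin m) ℝ}
  {N₁ N₂ : ℝ → ℝ → Matrix (Fin n) (Fin m) ℝ} {y : ℝ → EuclideanSpace ℝ (Fin m)}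

lemma threePI_congr {w : ℝ → EuclideanSpace ℝ (Fin m)} (hs : s ∈ Icc a b)
    (h : EqOn y w (Icc a b)) : threePI a b N₀ N₁ N₂ y s = threePI a b N₀ N₁ N₂ w s := by
  have ha : a ∈ Icc a b := left_mem_Icc.2 (hs.1.trans hs.2)
  have hb : b ∈ Icc a b := right_mem_Icc.2 (hs.1.trans hs.2)
  rw [threePI, threePI, h hs,
    intervalIntegral.integral_congr fun θ hθ => congrArg _ (h (uIcc_subset_Icc ha hs hθ)),
    intervalIntegral.integral_congr fun θ hθ => congrArg _ (h (uIcc_subset_Icc hs hb hθ))]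

lemma threePI_eq_kernelOp (hs : s ∈ Icc a b) {K : ℝ → ℝ → Matrix (Fin n) (Fin m) ℝ}
    (hKN : ∀ θ ∈ Icc a b, K s θ = piKernel N₁ N₂ s θ)
    (hK : IntervalIntegrable (fun θ => mulVecE (K s θ) (y θ)) volume a b) :
    threePI a b N₀ N₁ N₂ y s = kernelOp a b N₀ K y s := by
  have h₁ : EqOn (fun θ => mulVecE (K s θ) (y θ)) (fun θ => mulVecE (N₁ s θ) (y θ))
      (uIoc a s) := fun θ hθ => by
    rw [uIoc_of_le hs.1] at hθ
    simp only [hKN θ ⟨hθ.1.le, hθ.2.trans hs.2⟩, piKernel_of_le hθ.2]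
  have h₂ : EqOn (fun θ => mulVecE (K s θ) (y θ)) (fun θ => mulVecE (N₂ s θ) (y θ))
      (uIoc s b) := fun θ hθ => by
    rw [uIoc_of_le hs.2] at hθ
    simp only [hKN θ ⟨hs.1.trans hθ.1.le, hθ.2⟩, piKernel_of_lt hθ.1]
  rw [threePI, kernelOp, add_assoc,
    intervalIntegral.integral_eq_add_of_ae_eq
      ((hK.mono_set (uIcc_subset_uIcc_left (Icc_subset_uIcc hs))).congr h₁)
      ((hK.mono_set (uIcc_subset_uIcc_right (Icc_subset_uIcc hs))).congr h₂)
      (ae_restrict_of_forall_mem measurableSet_uIoc h₁)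
      (ae_restrict_of_forall_mem measurableSet_uIoc h₂)]

end ThreePI

noncomputable def kernelComp {p n m : ℕ} (a b : ℝ) (C₀ : ℝ → Matrix (Fin p) (Fin n) ℝ)
    (KC : ℝ → ℝ → Matrix (Fin p) (Fin n) ℝ) (R₀ : ℝ → Matrix (Fin n) (Fin m) ℝ)
    (KR : ℝ → ℝ → Matrix (Fin n) (Fin m) ℝ) (s η : ℝ) : Matrix (Fin p) (Fin m) ℝ :=
  C₀ s * KR s η + KC s η * R₀ η + ∫ θ in a..b, KC s θ * KR θ η

section KernelOp

variable {p n m : ℕ} {a b : ℝ} {y : ℝ → EuclideanSpace ℝ (Fin m)}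
  {R₀ : ℝ → Matrix (Fin n) (Fin m) ℝ} {KR : ℝ → ℝ → Matrix (Fin n) (Fin m) ℝ}

lemma MeasureTheory.MemLp.intervalIntegrable_mulVecE (hab : a ≤ b)
    {K : ℝ → Matrix (Fin n) (Fin m) ℝ} (hK : MemLp K ⊤ (volume.restrict (Ioc a b)))
    (hy : IntegrableOn y (Ioc a b)) :
    IntervalIntegrable (fun x => mulVecE (K x) (y x)) volume a b :=
  (intervalIntegrable_iff_integrableOn_Ioc_of_le hab).2 (hK.integrable_mulVecE hy)

lemma mulVecE_kernelOp {θ : ℝ}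
    (hKR : IntervalIntegrable (fun η => mulVecE (KR θ η) (y η)) volume a b)
    (A : Matrix (Fin p) (Fin n) ℝ) :
    mulVecE A (kernelOp a b R₀ KR y θ)
      = mulVecE (A * R₀ θ) (y θ) + ∫ η in a..b, mulVecE (A * KR θ η) (y η) := by
  simp only [kernelOp, mulVecE_add, mulVecE_intervalIntegral A hKR, mulVecE_mul]

lemma integrableOn_kernelOp (hab : a ≤ b) (hR₀ : MemLp R₀ ⊤ (volume.restrict (Ioc a b)))
    (hKR : IsBoundedKernel a b KR) (hy : IntegrableOn y (Ioc a b)) :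
    IntegrableOn (kernelOp a b R₀ KR y) (Ioc a b) := by
  refine (hR₀.integrable_mulVecE hy).add ?_
  simp only [intervalIntegral.integral_of_le hab]
  exact (hKR.memLp_uncurry.integrable_mulVecE (hy.comp_snd _)).integral_prod_left

variable {C₀ : ℝ → Matrix (Fin p) (Fin n) ℝ} {KC : ℝ → ℝ → Matrix (Fin p) (Fin n) ℝ} {s : ℝ}

lemma integrable_mulVecE_mul_kernel (hKC : MemLp (KC s) ⊤ (volume.restrict (Ioc a b)))
    (hKR : MemLp (Function.uncurry KR) ⊤
      ((volume.restrict (Ioc a b)).prod (volume.restrict (Ioc a b))))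
    (hy : IntegrableOn y (Ioc a b)) :
    Integrable (Function.uncurry fun θ η => mulVecE (KC s θ * KR θ η) (y η))
      ((volume.restrict (Ioc a b)).prod (volume.restrict (Ioc a b))) := by
  simp only [Function.uncurry_def, mulVecE_mul]
  exact (hKC.comp_fst _).integrable_mulVecE (hKR.integrable_mulVecE (hy.comp_snd _))

lemma mulVecE_kernelComp (hab : a ≤ b) {η : ℝ} (hKC : MemLp (KC s) ⊤ (volume.restrict (Ioc a b)))
    (hKR : MemLp (fun θ => KR θ η) ⊤ (volume.restrict (Ioc a b)))
    (v : EuclideanSpace ℝ (Fin m)) :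
    mulVecE (kernelComp a b C₀ KC R₀ KR s η) v = mulVecE (C₀ s * KR s η) v
      + mulVecE (KC s η * R₀ η) v + ∫ θ in a..b, mulVecE (KC s θ * KR θ η) v := by
  rw [kernelComp, add_mulVecE, add_mulVecE, intervalIntegral_mulVecE v
    ((intervalIntegrable_iff_integrableOn_Ioc_of_le hab).2
      ((hKC.matrix_mul hKR).integrable le_top))]

variable (hab : a ≤ b) (hs : s ∈ Icc a b) (hKC : IsBoundedKernel a b KC)
  (hR₀ : MemLp R₀ ⊤ (volume.restrict (Ioc a b))) (hKR : IsBoundedKernel a b KR)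
  (hy : IntegrableOn y (Ioc a b))
include hab hs hKC hR₀ hKR hy

lemma intervalIntegrable_mulVecE_kernelComp :
    IntervalIntegrable (fun η => mulVecE (kernelComp a b C₀ KC R₀ KR s η) (y η)) volume a b := by
  have hC₀KR := (memLp_top_const (C₀ s)).matrix_mul (hKR.memLp_apply s hs)
  have hKCR₀ := (hKC.memLp_apply s hs).matrix_mul hR₀
  refine ((hC₀KR.intervalIntegrable_mulVecE hab hy).add
    (hKCR₀.intervalIntegrable_mulVecE hab hy)).add (intervalIntegrable_integral_right hab
      (integrable_mulVecE_mul_kernel (hKC.memLp_apply s hs) hKR.memLp_uncurry hy))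
    |>.congr fun η hη => ?_
  rw [uIoc_of_le hab] at hη
  exact (mulVecE_kernelComp hab (hKC.memLp_apply s hs)
    (hKR.memLp_flip η (Ioc_subset_Icc_self hη)) _).symm

lemma kernelOp_comp :
    kernelOp a b C₀ KC (kernelOp a b R₀ KR y) s
      = kernelOp a b (fun s => C₀ s * R₀ s) (kernelComp a b C₀ KC R₀ KR) y s := by
  have hrow : ∀ θ ∈ uIcc a b, IntervalIntegrable (fun η => mulVecE (KR θ η) (y η)) volume a b :=
    fun θ hθ => (hKR.memLp_apply θ (uIcc_of_le hab ▸ hθ)).intervalIntegrable_mulVecE hab hy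
  have hC₀KR := ((memLp_top_const (C₀ s)).matrix_mul
    (hKR.memLp_apply s hs)).intervalIntegrable_mulVecE hab hy
  have hKCR₀ := ((hKC.memLp_apply s hs).matrix_mul hR₀).intervalIntegrable_mulVecE hab hy
  have hΦ := integrable_mulVecE_mul_kernel (hKC.memLp_apply s hs) hKR.memLp_uncurry hy
  calc kernelOp a b C₀ KC (kernelOp a b R₀ KR y) s
      = mulVecE (C₀ s * R₀ s) (y s) + (∫ η in a..b, mulVecE (C₀ s * KR s η) (y η))
          + ((∫ θ in a..b, mulVecE (KC s θ * R₀ θ) (y θ))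
            + ∫ θ in a..b, ∫ η in a..b, mulVecE (KC s θ * KR θ η) (y η)) := by
        rw [kernelOp, mulVecE_kernelOp (hrow s (Icc_subset_uIcc hs)),
          intervalIntegral.integral_congr fun θ hθ => mulVecE_kernelOp (hrow θ hθ) (KC s θ),
          intervalIntegral.integral_add hKCR₀ (intervalIntegrable_integral_left hab hΦ)]
    _ = mulVecE (C₀ s * R₀ s) (y s) + ∫ η in a..b, (mulVecE (C₀ s * KR s η) (y η)
          + mulVecE (KC s η * R₀ η) (y η) + ∫ θ in a..b, mulVecE (KC s θ * KR θ η) (y η)) := by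
        rw [intervalIntegral_integral_swap hab hΦ, intervalIntegral.integral_add
          (hC₀KR.add hKCR₀) (intervalIntegrable_integral_right hab hΦ),
          intervalIntegral.integral_add hC₀KR hKCR₀]
        abel
    _ = kernelOp a b (fun s => C₀ s * R₀ s) (kernelComp a b C₀ KC R₀ KR) y s := by
        rw [kernelOp]
        congr 1
        refine intervalIntegral.integral_congr fun η hη => ?_
        rw [mulVecE_kernelComp hab (hKC.memLp_apply s hs) (hKR.memLp_flip η (uIcc_of_le hab ▸ hη))]

end KernelOp

lemma continuousOn_mul_slice {p n m : ℕ} {a b s η : ℝ} {C : ℝ → ℝ → Matrix (Fin p) (Fin n) ℝ}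
    {R : ℝ → ℝ → Matrix (Fin n) (Fin m) ℝ}
    (hC : ContinuousOn (Function.uncurry C) (Icc a b ×ˢ Icc a b))
    (hR : ContinuousOn (Function.uncurry R) (Icc a b ×ˢ Icc a b))
    (hs : s ∈ Icc a b) (hη : η ∈ Icc a b) :
    ContinuousOn (fun θ => C s θ * R θ η) (Icc a b) :=
  (Continuous.matrix_mul continuous_fst continuous_snd).comp_continuousOn
    ((hC.uncurry_left s hs).prodMk (hR.uncurry_right η hη))

section ComposedKernel

variable {p n m : ℕ} {a b : ℝ} {C₁ C₂ : ℝ → ℝ → Matrix (Fin p) (Fin n) ℝ}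
  {R₁ R₂ : ℝ → ℝ → Matrix (Fin n) (Fin m) ℝ}
  (hC₁ : ContinuousOn (Function.uncurry C₁) (Icc a b ×ˢ Icc a b))
  (hC₂ : ContinuousOn (Function.uncurry C₂) (Icc a b ×ˢ Icc a b))
  (hR₁ : ContinuousOn (Function.uncurry R₁) (Icc a b ×ˢ Icc a b))
  (hR₂ : ContinuousOn (Function.uncurry R₂) (Icc a b ×ˢ Icc a b))
  {s η : ℝ} (hs : s ∈ Icc a b) (hη : η ∈ Icc a b)
include hC₁ hC₂ hR₁ hR₂ hs hη

lemma integral_piKernel_mul_piKernel_of_le (h : η ≤ s) :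
    ∫ θ in a..b, piKernel C₁ C₂ s θ * piKernel R₁ R₂ θ η
      = (∫ θ in a..η, C₁ s θ * R₂ θ η) + (∫ θ in η..s, C₁ s θ * R₁ θ η)
        + ∫ θ in s..b, C₂ s θ * R₁ θ η := by
  have hsub : ∀ {c d}, c ∈ Icc a b → d ∈ Icc a b → uIcc c d ⊆ Icc a b := uIcc_subset_Icc
  have ha : a ∈ Icc a b := left_mem_Icc.2 (hs.1.trans hs.2)
  have hb : b ∈ Icc a b := right_mem_Icc.2 (hs.1.trans hs.2)
  refine intervalIntegral.integral_eq_add_add_of_ae_eq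
    ((continuousOn_mul_slice hC₁ hR₂ hs hη).mono (hsub ha hη)).intervalIntegrable
    ((continuousOn_mul_slice hC₁ hR₁ hs hη).mono (hsub hη hs)).intervalIntegrable
    ((continuousOn_mul_slice hC₂ hR₁ hs hη).mono (hsub hs hb)).intervalIntegrable ?_ ?_ ?_
  · filter_upwards [ae_restrict_mem measurableSet_uIoc, ae_restrict_of_ae (Measure.ae_ne volume η)]
      with θ hθ hθη
    rw [uIoc_of_le hη.1] at hθ
    have hθη' : θ < η := lt_of_le_of_ne hθ.2 hθη
    simp only [piKernel_of_le (hθ.2.trans h), piKernel_of_lt hθη']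
  · refine ae_restrict_of_forall_mem measurableSet_uIoc fun θ hθ => ?_
    rw [uIoc_of_le h] at hθ
    simp only [piKernel_of_le hθ.2, piKernel_of_le hθ.1.le]
  · refine ae_restrict_of_forall_mem measurableSet_uIoc fun θ hθ => ?_
    rw [uIoc_of_le hs.2] at hθ
    simp only [piKernel_of_lt hθ.1, piKernel_of_le (h.trans hθ.1.le)]

lemma integral_piKernel_mul_piKernel_of_lt (h : s < η) :
    ∫ θ in a..b, piKernel C₁ C₂ s θ * piKernel R₁ R₂ θ η
      = (∫ θ in a..s, C₁ s θ * R₂ θ η) + (∫ θ in s..η, C₂ s θ * R₂ θ η)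
        + ∫ θ in η..b, C₂ s θ * R₁ θ η := by
  have hsub : ∀ {c d}, c ∈ Icc a b → d ∈ Icc a b → uIcc c d ⊆ Icc a b := uIcc_subset_Icc
  have ha : a ∈ Icc a b := left_mem_Icc.2 (hs.1.trans hs.2)
  have hb : b ∈ Icc a b := right_mem_Icc.2 (hs.1.trans hs.2)
  refine intervalIntegral.integral_eq_add_add_of_ae_eq
    ((continuousOn_mul_slice hC₁ hR₂ hs hη).mono (hsub ha hs)).intervalIntegrable
    ((continuousOn_mul_slice hC₂ hR₂ hs hη).mono (hsub hs hη)).intervalIntegrable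
    ((continuousOn_mul_slice hC₂ hR₁ hs hη).mono (hsub hη hb)).intervalIntegrable ?_ ?_ ?_
  · refine ae_restrict_of_forall_mem measurableSet_uIoc fun θ hθ => ?_
    rw [uIoc_of_le hs.1] at hθ
    simp only [piKernel_of_le hθ.2, piKernel_of_lt (hθ.2.trans_lt h)]
  · filter_upwards [ae_restrict_mem measurableSet_uIoc, ae_restrict_of_ae (Measure.ae_ne volume η)]
      with θ hθ hθη
    rw [uIoc_of_le h.le] at hθ
    simp only [piKernel_of_lt hθ.1, piKernel_of_lt (lt_of_le_of_ne hθ.2 hθη)]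
  · refine ae_restrict_of_forall_mem measurableSet_uIoc fun θ hθ => ?_
    rw [uIoc_of_le hη.2] at hθ
    simp only [piKernel_of_lt (h.trans hθ.1), piKernel_of_le hθ.1.le]

lemma piKernel_eq_kernelComp (C₀ : ℝ → Matrix (Fin p) (Fin n) ℝ)
    (R₀ : ℝ → Matrix (Fin n) (Fin m) ℝ) :
    piKernel
        (fun s η => C₀ s * R₁ s η + C₁ s η * R₀ η
          + (∫ θ in a..η, C₁ s θ * R₂ θ η) + (∫ θ in η..s, C₁ s θ * R₁ θ η)
          + ∫ θ in s..b, C₂ s θ * R₁ θ η)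
        (fun s η => C₀ s * R₂ s η + C₂ s η * R₀ η
          + (∫ θ in a..s, C₁ s θ * R₂ θ η) + (∫ θ in s..η, C₂ s θ * R₂ θ η)
          + ∫ θ in η..b, C₂ s θ * R₁ θ η) s η
      = kernelComp a b C₀ (piKernel C₁ C₂) R₀ (piKernel R₁ R₂) s η := by
  rcases le_or_gt η s with h | h
  · rw [kernelComp, piKernel_of_le h, piKernel_of_le h, piKernel_of_le h,
      integral_piKernel_mul_piKernel_of_le hC₁ hC₂ hR₁ hR₂ hs hη h]
    abel
  · rw [kernelComp, piKernel_of_lt h, piKernel_of_lt h, piKernel_of_lt h,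
      integral_piKernel_mul_piKernel_of_lt hC₁ hC₂ hR₁ hR₂ hs hη h]
    abel

end ComposedKernel

end

theorem threePI_comp_general {p n m : ℕ} {a b : ℝ} (hab : a < b)
    (C₀ : ℝ → Matrix (Fin p) (Fin n) ℝ) (C₁ C₂ : ℝ → ℝ → Matrix (Fin p) (Fin n) ℝ)
    (R₀ : ℝ → Matrix (Fin n) (Fin m) ℝ) (R₁ R₂ : ℝ → ℝ → Matrix (Fin n) (Fin m) ℝ)
    (hC₁ : ContinuousOn (fun z : ℝ × ℝ => C₁ z.1 z.2) (Icc a b ×ˢ Icc a b))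
    (hC₂ : ContinuousOn (fun z : ℝ × ℝ => C₂ z.1 z.2) (Icc a b ×ˢ Icc a b))
    (hR₀ : ContinuousOn R₀ (Icc a b))
    (hR₁ : ContinuousOn (fun z : ℝ × ℝ => R₁ z.1 z.2) (Icc a b ×ˢ Icc a b))
    (hR₂ : ContinuousOn (fun z : ℝ × ℝ => R₂ z.1 z.2) (Icc a b ×ˢ Icc a b))
    (y : ℝ → EuclideanSpace ℝ (Fin m))
    (hy : MemLp y 2 (volume.restrict (Icc a b))) :
    ∀ᵐ s ∂(volume.restrict (Icc a b)),
      threePI a b C₀ C₁ C₂ (threePI a b R₀ R₁ R₂ y) s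
        = threePI a b
            (fun s => C₀ s * R₀ s)
            (fun s η => C₀ s * R₁ s η + C₁ s η * R₀ η
              + (∫ θ in a..η, C₁ s θ * R₂ θ η) + (∫ θ in η..s, C₁ s θ * R₁ θ η)
              + ∫ θ in s..b, C₂ s θ * R₁ θ η)
            (fun s η => C₀ s * R₂ s η + C₂ s η * R₀ η
              + (∫ θ in a..s, C₁ s θ * R₂ θ η) + (∫ θ in s..η, C₂ s θ * R₂ θ η)
              + ∫ θ in η..b, C₂ s θ * R₁ θ η)
            y s := by
  have hy₁ : IntegrableOn y (Ioc a b) :=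
    IntegrableOn.mono_set (hy.integrable one_le_two) Ioc_subset_Icc_self
  have hR₀' := (hR₀.memLp_top (μ := volume) isCompact_Icc measurableSet_Icc).mono_measure
    (Measure.restrict_mono Ioc_subset_Icc_self le_rfl)
  have hKC := isBoundedKernel_piKernel hC₁ hC₂
  have hKR := isBoundedKernel_piKernel hR₁ hR₂
  refine ae_restrict_of_forall_mem measurableSet_Icc fun s hs => ?_
  have hRy : EqOn (threePI a b R₀ R₁ R₂ y) (kernelOp a b R₀ (piKernel R₁ R₂) y) (Icc a b) :=
    fun θ hθ => threePI_eq_kernelOp hθ (fun _ _ => rfl)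
      ((hKR.memLp_apply θ hθ).intervalIntegrable_mulVecE hab.le hy₁)
  calc threePI a b C₀ C₁ C₂ (threePI a b R₀ R₁ R₂ y) s
      = threePI a b C₀ C₁ C₂ (kernelOp a b R₀ (piKernel R₁ R₂) y) s := threePI_congr hs hRy
    _ = kernelOp a b C₀ (piKernel C₁ C₂) (kernelOp a b R₀ (piKernel R₁ R₂) y) s :=
        threePI_eq_kernelOp hs (fun _ _ => rfl) ((hKC.memLp_apply s hs).intervalIntegrable_mulVecE
          hab.le (integrableOn_kernelOp hab.le hR₀' hKR hy₁))
    _ = kernelOp a b (fun s => C₀ s * R₀ s)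
          (kernelComp a b C₀ (piKernel C₁ C₂) R₀ (piKernel R₁ R₂)) y s :=
        kernelOp_comp hab.le hs hKC hR₀' hKR hy₁
    _ = _ := (threePI_eq_kernelOp hs
        (fun η hη => (piKernel_eq_kernelComp hC₁ hC₂ hR₁ hR₂ hs hη C₀ R₀).symm)
        (intervalIntegrable_mulVecE_kernelComp hab.le hs hKC hR₀' hKR hy₁)).symm

/-- The composition of two 3-PI operators is the 3-PI operator with the stated
composite kernels: for every `y ∈ L²` and almost every `s ∈ [a,b]`,
`(P_{C₀,C₁,C₂}(P_{R₀,R₁,R₂} y))(s) = (P_{R̂₀,R̂₁,R̂₂} y)(s)`. -/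
theorem threePI_comp {p n m : ℕ} {a b : ℝ} (hab : a < b)
    (C₀ : ℝ → Matrix (Fin p) (Fin n) ℝ) (C₁ C₂ : ℝ → ℝ → Matrix (Fin p) (Fin n) ℝ)
    (R₀ : ℝ → Matrix (Fin n) (Fin m) ℝ) (R₁ R₂ : ℝ → ℝ → Matrix (Fin n) (Fin m) ℝ)
    (hC₀ : ContinuousOn C₀ (Icc a b))
    (hC₁ : ContinuousOn (fun z : ℝ × ℝ => C₁ z.1 z.2) (Icc a b ×ˢ Icc a b))
    (hC₂ : ContinuousOn (fun z : ℝ × ℝ => C₂ z.1 z.2) (Icc a b ×ˢ Icc a b))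
    (hR₀ : ContinuousOn R₀ (Icc a b))
    (hR₁ : ContinuousOn (fun z : ℝ × ℝ => R₁ z.1 z.2) (Icc a b ×ˢ Icc a b))
    (hR₂ : ContinuousOn (fun z : ℝ × ℝ => R₂ z.1 z.2) (Icc a b ×ˢ Icc a b))
    (y : ℝ → EuclideanSpace ℝ (Fin m))
    (hy : MemLp y 2 (volume.restrict (Icc a b))) :
    ∀ᵐ s ∂(volume.restrict (Icc a b)),
      threePI a b C₀ C₁ C₂ (threePI a b R₀ R₁ R₂ y) s
        = threePI a b
            (fun s => C₀ s * R₀ s)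
            (fun s η => C₀ s * R₁ s η + C₁ s η * R₀ η
              + (∫ θ in a..η, C₁ s θ * R₂ θ η) + (∫ θ in η..s, C₁ s θ * R₁ θ η)
              + ∫ θ in s..b, C₂ s θ * R₁ θ η)
            (fun s η => C₀ s * R₂ s η + C₂ s η * R₀ η
              + (∫ θ in a..s, C₁ s θ * R₂ θ η) + (∫ θ in s..η, C₂ s θ * R₂ θ η)
              + ∫ θ in η..b, C₂ s θ * R₁ θ η)
            y s :=
  threePI_comp_general hab C₀ C₁ C₂ R₀ R₁ R₂ hC₁ hC₂ hR₀ hR₁ hR₂ y hy
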